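/- Let G be an edge-colored graph on n vertices with t ≥ s ≥ 2 and n ≥ t. If Σ_{v ∈ V(G)} d^c(v) > n²/2 + σ_{s,t}·n^{2−1/s} + s·n, where σ_{s,t} = s((t−1)/(s−1)!)^{1/s}, then G contains a properly colored K_{s,t}. -/

import Mathlib

/-!
In every vertex `v` choose a rainbow star `S v`: a set of `d^c(v)` neighbours joined to `v` by
edges of pairwise distinct colours. Call `u` a mutual neighbour of `v` when `u ∈ S v` and
`v ∈ S u`. Among the `n²` ordered pairs only the mutual ones are counted twice by `Σ_v |S v|`,
so the mutual degrees sum to at least `2 Σ_v d^c(v) - n²`, which the hypothesis makes large.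
Jensen's inequality for binomial coefficients then gives `Σ_v C(|T v|, s) > (t - 1) C(n, s)`
for the mutual neighbourhoods `T v`, so by pigeonhole some `s`-set `A` lies in `T b` for `t`
vertices `b`. An edge `ab` with `a ∈ T b` lies in both stars `S a` and `S b`, so the colours at
`a` and at `b` are distinct: `A` and these `t` vertices span a properly coloured `K_{s,t}`.
-/

open Finset

lemma Set.exists_finset_subset_injOn_card_eq_ncard_image {α β : Type*} [Finite α]
    (f : α → β) (s : Set α) :
    ∃ u : Finset α, ↑u ⊆ s ∧ Set.InjOn f u ∧ #u = (f '' s).ncard := by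
  obtain ⟨u, hus, hinj, himg⟩ := (Set.surjOn_image f s).exists_subset_injOn_image_eq
  have hu : u.Finite := u.toFinite
  refine ⟨hu.toFinset, by simpa, by simpa, ?_⟩
  rw [← himg, hinj.ncard_image, Set.ncard_eq_toFinset_card _ hu]

section MutualNbhd

variable {α : Type*} [DecidableEq α]

def mutualNbhd (S : α → Finset α) (v : α) : Finset α := (S v).filter fun u => v ∈ S u

lemma mem_mutualNbhd {S : α → Finset α} {u v : α} :
    u ∈ mutualNbhd S v ↔ u ∈ S v ∧ v ∈ S u :=
  mem_filter

lemma two_mul_sum_card_le_sum_card_mutualNbhd_add [Fintype α] (S : α → Finset α) :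
    2 * ∑ v, #(S v) ≤ ∑ v, #(mutualNbhd S v) + Fintype.card α ^ 2 := by
  have hcard : ∀ A : Finset α, #A = ∑ u, if u ∈ A then 1 else 0 := fun A => by
    rw [sum_boole, filter_univ_mem, Nat.cast_id]
  calc 2 * ∑ v, #(S v)
      = ∑ v, ∑ u, ((if u ∈ S v then 1 else 0) + if v ∈ S u then 1 else 0) := by
        simp_rw [hcard, sum_add_distrib]
        rw [sum_comm (f := fun v u => if v ∈ S u then 1 else 0)]
        ring
    _ ≤ ∑ v, ∑ u, ((if u ∈ mutualNbhd S v then 1 else 0) + 1) := by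
        refine sum_le_sum fun v _ => sum_le_sum fun u _ => ?_
        simp only [mem_mutualNbhd]
        split_ifs <;> simp_all
    _ = ∑ v, #(mutualNbhd S v) + Fintype.card α ^ 2 := by
        simp_rw [sum_add_distrib, hcard, sum_const, card_univ, smul_eq_mul, mul_one, sq]

lemma properlyColored_of_subset_mutualNbhd {C : Type*} {G : SimpleGraph α}
    {c : α → α → C} (hc : ∀ u v, c u v = c v u) {S : α → Finset α}
    (hSadj : ∀ v, ∀ u ∈ S v, G.Adj v u) (hSinj : ∀ v, Set.InjOn (c v) (S v))
    {A B : Finset α} (hAB : ∀ b ∈ B, A ⊆ mutualNbhd S b) :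
    Disjoint A B ∧ (∀ a ∈ A, ∀ b ∈ B, G.Adj a b) ∧
      (∀ a ∈ A, ∀ b ∈ B, ∀ b' ∈ B, b ≠ b' → c a b ≠ c a b') ∧
      (∀ b ∈ B, ∀ a ∈ A, ∀ a' ∈ A, a ≠ a' → c a b ≠ c a' b) := by
  have hmem : ∀ a ∈ A, ∀ b ∈ B, a ∈ S b ∧ b ∈ S a := fun a ha b hb =>
    mem_mutualNbhd.mp (hAB b hb ha)
  refine ⟨disjoint_left.mpr fun a ha haB => G.irrefl (hSadj a a (hmem a ha a haB).1),
    fun a ha b hb => hSadj a b (hmem a ha b hb).2, ?_, ?_⟩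
  · intro a ha b hb b' hb' hne hcol
    exact hne (hSinj a (hmem a ha b hb).2 (hmem a ha b' hb').2 hcol)
  · intro b hb a ha a' ha' hne hcol
    refine hne (hSinj b (hmem a ha b hb).1 (hmem a' ha' b hb).1 ?_)
    rwa [hc b a, hc b a']

end MutualNbhd

lemma exists_card_eq_lt_card_filter_subset {ι α : Type*} [Fintype ι] [Fintype α]
    [DecidableEq α] (T : ι → Finset α) {m s : ℕ}
    (h : m * (Fintype.card α).choose s < ∑ i, (#(T i)).choose s) :
    ∃ A : Finset α, #A = s ∧ m < #{i | A ⊆ T i} := by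
  have hcount : ∑ A ∈ powersetCard s univ, #{i | A ⊆ T i} = ∑ i, (#(T i)).choose s := by
    refine (sum_card_bipartiteAbove_eq_sum_card_bipartiteBelow (r := fun A i => A ⊆ T i)).trans
      (sum_congr rfl fun i _ => ?_)
    rw [bipartiteBelow, ← card_powersetCard]
    congr 1
    ext A
    simp [mem_powersetCard, and_comm]
  rw [← hcount, ← card_univ, ← card_powersetCard, mul_comm, ← smul_eq_mul, ← sum_const]
    at h
  obtain ⟨A, hA, hlt⟩ := exists_lt_of_sum_lt h
  exact ⟨A, (mem_powersetCard.mp hA).2, hlt⟩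

lemma Real.rpow_one_sub_inv_pow {x : ℝ} (hx : 0 ≤ x) {s : ℕ} (hs : 1 ≤ s) :
    (x ^ (1 - 1 / (s : ℝ))) ^ s = x ^ (s - 1) := by
  rw [← Real.rpow_natCast, ← Real.rpow_mul hx, ← Real.rpow_natCast, Nat.cast_sub hs]
  congr 1
  field_simp
  norm_num

/-- The constant `σ_{s,t}` of the theorem. -/
noncomputable def kstConstant (s t : ℕ) : ℝ :=
  s * (((t : ℝ) - 1) / (Nat.factorial (s - 1))) ^ ((1 : ℝ) / s)

lemma kstConstant_nonneg (s : ℕ) {t : ℕ} (ht : 1 ≤ t) : 0 ≤ kstConstant s t := by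
  have : (0 : ℝ) ≤ t - 1 := sub_nonneg.mpr (Nat.one_le_cast.mpr ht)
  unfold kstConstant
  positivity

lemma sub_one_le_kstConstant_pow {s t : ℕ} (hs : 1 ≤ s) (ht : 1 ≤ t) :
    (t : ℝ) - 1 ≤ kstConstant s t ^ s := by
  have ht' : (0 : ℝ) ≤ t - 1 := sub_nonneg.mpr (Nat.one_le_cast.mpr ht)
  have hfac : (0 : ℝ) < (s - 1).factorial := by positivity
  have hpow : kstConstant s t ^ s = (s : ℝ) ^ s * ((t - 1) / (s - 1).factorial) := by
    rw [kstConstant, mul_pow, one_div, Real.rpow_inv_natCast_pow (by positivity) (by omega)]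
  have hfac_le : ((s - 1).factorial : ℝ) ≤ (s : ℝ) ^ s := by
    exact_mod_cast (Nat.factorial_le_pow (s - 1)).trans
      ((Nat.pow_le_pow_left (by omega) _).trans (Nat.pow_le_pow_right (by omega) (by omega)))
  rw [hpow, mul_div_assoc', le_div_iff₀ hfac, mul_comm]
  exact mul_le_mul_of_nonneg_right hfac_le ht'

lemma sub_one_mul_descFactorial_lt {n s t : ℕ} (hn : 0 < n) (hs : 1 ≤ s) (ht : 1 ≤ t)
    {y : ℝ} (hy : kstConstant s t * (n : ℝ) ^ (1 - 1 / (s : ℝ)) < y) :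
    ((t : ℝ) - 1) * n.descFactorial s < n * y ^ s := by
  have hσ := kstConstant_nonneg s ht
  calc ((t : ℝ) - 1) * n.descFactorial s
      ≤ ((t : ℝ) - 1) * n ^ s := by
        gcongr
        · exact sub_nonneg.mpr (Nat.one_le_cast.mpr ht)
        · exact_mod_cast Nat.descFactorial_le_pow n s
    _ ≤ kstConstant s t ^ s * n ^ s := by
        gcongr
        exact sub_one_le_kstConstant_pow hs ht
    _ = n * (kstConstant s t * (n : ℝ) ^ (1 - 1 / (s : ℝ))) ^ s := by
        rw [mul_pow, Real.rpow_one_sub_inv_pow n.cast_nonneg hs, mul_left_comm, ← pow_succ',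
          Nat.sub_add_cancel hs]
    _ < n * y ^ s := by gcongr

section Jensen

variable {ι : Type*} [Fintype ι] [Nonempty ι] (d : ι → ℕ)

lemma card_mul_pow_le_factorial_mul_sum_choose {s : ℕ} (hs : s ≠ 0)
    (h : (s : ℝ) - 1 ≤ (∑ i, (d i : ℝ)) / Fintype.card ι) :
    Fintype.card ι * ((∑ i, (d i : ℝ)) / Fintype.card ι - s + 1) ^ s
      ≤ s.factorial * ∑ i, ((d i).choose s : ℝ) := by
  set N : ℝ := (Fintype.card ι : ℝ)
  set μ : ℝ := (∑ i, (d i : ℝ)) / N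
  have hN : 0 < N := Nat.cast_pos.mpr Fintype.card_pos
  have hmean : ∑ i, 1 / N * d i = μ := by
    rw [← mul_sum]
    ring
  have hjensen := descPochhammer_eval_div_factorial_le_sum_choose hs d (t := univ)
    (fun _ => 1 / N) (fun _ _ => by positivity) (by simp [card_univ, N, hN.ne']) (hmean ▸ h)
  rw [hmean, ← mul_sum, div_le_iff₀ (by positivity)] at hjensen
  calc N * (μ - s + 1) ^ s
      ≤ N * (descPochhammer ℝ s).eval μ := by
        gcongr
        exact pow_le_descPochhammer_eval h
    _ ≤ N * ((1 / N * ∑ i, ((d i).choose s : ℝ)) * s.factorial) := by gcongr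
    _ = s.factorial * ∑ i, ((d i).choose s : ℝ) := by field_simp

lemma sub_one_mul_choose_lt_sum_choose {s t : ℕ} (hs : 1 ≤ s) (ht : 1 ≤ t)
    (hd : kstConstant s t * (Fintype.card ι : ℝ) ^ (1 - 1 / (s : ℝ))
      < (∑ i, (d i : ℝ)) / Fintype.card ι - (s - 1)) :
    (t - 1) * (Fintype.card ι).choose s < ∑ i, (d i).choose s := by
  have hσ : 0 ≤ kstConstant s t * (Fintype.card ι : ℝ) ^ (1 - 1 / (s : ℝ)) := by
    have := kstConstant_nonneg s ht
    positivity
  have key : (s.factorial : ℝ) * (((t : ℝ) - 1) * (Fintype.card ι).choose s)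
      < s.factorial * ∑ i, ((d i).choose s : ℝ) :=
    calc (s.factorial : ℝ) * (((t : ℝ) - 1) * (Fintype.card ι).choose s)
        = ((t : ℝ) - 1) * (Fintype.card ι).descFactorial s := by
          rw [Nat.descFactorial_eq_factorial_mul_choose]
          push_cast
          ring
      _ < Fintype.card ι * ((∑ i, (d i : ℝ)) / Fintype.card ι - s + 1) ^ s :=
          sub_one_mul_descFactorial_lt Fintype.card_pos hs ht (by linarith)
      _ ≤ s.factorial * ∑ i, ((d i).choose s : ℝ) :=
          card_mul_pow_le_factorial_mul_sum_choose d (by omega) (by linarith)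
  have := lt_of_mul_lt_mul_left key (by positivity)
  rw [← Nat.cast_pred ht] at this
  exact_mod_cast this

end Jensen

/-- Every edge-colored graph `G` on `n` vertices (`2 ≤ s ≤ t ≤ n`) with
`Σ_v d^c(v) > n²/2 + σ_{s,t}·n^{2-1/s} + s·n`, where `σ_{s,t} = s((t-1)/(s-1)!)^{1/s}`,
contains a properly colored `K_{s,t}`. -/
theorem stmt_13 (n s t : ℕ) (hs : 2 ≤ s) (hst : s ≤ t) (htn : t ≤ n) {C : Type*}
    (G : SimpleGraph (Fin n)) (c : Fin n → Fin n → C) (hc : ∀ u v, c u v = c v u)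
    (hsum : ((∑ v : Fin n, ((c v) '' {u | G.Adj v u}).ncard : ℕ) : ℝ) >
      (n : ℝ) ^ 2 / 2 +
        (s : ℝ) * (((t : ℝ) - 1) / (Nat.factorial (s - 1))) ^ ((1 : ℝ) / s) *
          (n : ℝ) ^ (2 - 1 / (s : ℝ)) + (s : ℝ) * n) :
    ∃ (A B : Finset (Fin n)), Disjoint A B ∧ A.card = s ∧ B.card = t ∧
      (∀ a ∈ A, ∀ b ∈ B, G.Adj a b) ∧
      (∀ a ∈ A, ∀ b ∈ B, ∀ b' ∈ B, b ≠ b' → c a b ≠ c a b') ∧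
      (∀ b ∈ B, ∀ a ∈ A, ∀ a' ∈ A, a ≠ a' → c a b ≠ c a' b) := by
  have hn : 0 < n := by omega
  have : Nonempty (Fin n) := Fin.pos_iff_nonempty.mp hn
  choose S hSadj hSinj hScard using fun v =>
    Set.exists_finset_subset_injOn_card_eq_ncard_image (c v) {u | G.Adj v u}
  set σn := kstConstant s t * (n : ℝ) ^ (1 - 1 / (s : ℝ))
  have hσn : 0 ≤ σn := mul_nonneg (kstConstant_nonneg s (by omega)) (by positivity)
  have hstars : (n : ℝ) ^ 2 / 2 + σn * n + s * n < ∑ v, (#(S v) : ℝ) :=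
    calc (n : ℝ) ^ 2 / 2 + σn * n + s * n
        = (n : ℝ) ^ 2 / 2 + kstConstant s t * (n : ℝ) ^ (2 - 1 / (s : ℝ)) + s * n := by
          rw [show (2 : ℝ) - 1 / s = 1 + (1 - 1 / s) by ring, Real.rpow_add (by positivity),
            Real.rpow_one]
          ring
      _ < ∑ v, (#(S v) : ℝ) := by simpa [hScard, kstConstant] using hsum
  have hmutual : 2 * ∑ v, (#(S v) : ℝ) ≤ ∑ v, (#(mutualNbhd S v) : ℝ) + n ^ 2 := by
    exact_mod_cast Fintype.card_fin n ▸ two_mul_sum_card_le_sum_card_mutualNbhd_add S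
  have hdeg : kstConstant s t * (Fintype.card (Fin n) : ℝ) ^ (1 - 1 / (s : ℝ))
      < (∑ v, (#(mutualNbhd S v) : ℝ)) / Fintype.card (Fin n) - (s - 1) := by
    rw [Fintype.card_fin, lt_sub_iff_add_lt, lt_div_iff₀ (by positivity)]
    nlinarith [mul_nonneg hσn n.cast_nonneg]
  obtain ⟨A, hA, hAB⟩ := exists_card_eq_lt_card_filter_subset (mutualNbhd S)
    (sub_one_mul_choose_lt_sum_choose _ (by omega) (by omega) hdeg)
  obtain ⟨B, hBA, hB⟩ := exists_subset_card_eq (show t ≤ #{v | A ⊆ mutualNbhd S v} by omega)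
  obtain ⟨hdisj, hadj, hrow, hcol⟩ := properlyColored_of_subset_mutualNbhd hc
    (fun v u hu => hSadj v hu) hSinj (A := A) fun b hb => (mem_filter.mp (hBA hb)).2
  exact ⟨A, B, hdisj, hA, hB, hadj, hrow, hcol⟩
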